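/- arXiv:1103.0194 — 6 statements merged into one kernel-verified Lean document; each statement's English description precedes it below -/
import Mathlib

section
/- Let A be a symmetric positive semi-definite d×d real matrix that is not zero, and let H be a symmetric positive definite d×d matrix. Let q₊(A) denote the smallest positive eigenvalue of A and m(H) the smallest eigenvalue of H. Then for every vector v, ⟨A H A v, v⟩ ≥ m(H) · q₊(A) · ⟨A v, v⟩. -/
/-!
In the Loewner order `A H A ≥ m(H) • A² ≥ m(H) q₊(A) • A`: the first step conjugates
`m(H) ≤ H` by `A`, the second holds because `x² ≥ q₊(A) x` on the spectrum of `A`, which lies in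
`{0} ∪ [q₊(A), ∞)`. Pairing with `v` gives the claim.
-/

open Matrix

/-- The smallest eigenvalue of a matrix. -/
noncomputable def minEig {d : ℕ} (M : Matrix (Fin d) (Fin d) ℝ) : ℝ :=
  sInf {r : ℝ | Module.End.HasEigenvalue M.mulVecLin r}

/-- The smallest positive eigenvalue of a matrix. -/
noncomputable def minPosEig {d : ℕ} (M : Matrix (Fin d) (Fin d) ℝ) : ℝ :=
  sInf {r : ℝ | 0 < r ∧ Module.End.HasEigenvalue M.mulVecLin r}

open scoped MatrixOrder

section LoewnerOrder

variable {A : Type*} [Ring A] [StarRing A] [PartialOrder A] [StarOrderedRing A] [Algebra ℝ A]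

theorem smul_mul_self_le_mul_mul_of_algebraMap_le {a h : A} (ha : IsSelfAdjoint a) {m : ℝ}
    (hm : algebraMap ℝ A m ≤ h) : m • (a * a) ≤ a * h * a := by
  have := star_left_conjugate_le_conjugate hm a
  rwa [ha.star_eq, ← Algebra.commutes, mul_assoc, ← Algebra.smul_def] at this

theorem smul_le_mul_self_of_le_of_mem_spectrum [TopologicalSpace A]
    [ContinuousFunctionalCalculus ℝ A IsSelfAdjoint] [NonnegSpectrumClass ℝ A] {a : A}
    (ha : 0 ≤ a) {q : ℝ} (hq : ∀ x ∈ spectrum ℝ a, 0 < x → q ≤ x) : q • a ≤ a * a := by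
  have hcfc : 0 ≤ cfc (fun x : ℝ ↦ x * x - q * x) a := cfc_nonneg fun x hx ↦ by
    rcases (spectrum_nonneg_of_nonneg ha hx).eq_or_lt with hx0 | hx0
    · simp [← hx0]
    · nlinarith [hq x hx hx0]
  rwa [cfc_sub _ _ a, cfc_mul _ _ a, cfc_const_mul _ _ a, cfc_id' ℝ a, sub_nonneg] at hcfc

end LoewnerOrder

namespace Matrix

theorem mulVec_dotProduct_le_of_le {n : Type*} [Fintype n] {M N : Matrix n n ℝ} (h : M ≤ N)
    (v : n → ℝ) : M *ᵥ v ⬝ᵥ v ≤ N *ᵥ v ⬝ᵥ v := by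
  have := (le_iff.mp h).dotProduct_mulVec_nonneg v
  rw [star_trivial, sub_mulVec, dotProduct_sub, sub_nonneg] at this
  rwa [dotProduct_comm (M *ᵥ v), dotProduct_comm (N *ᵥ v)]

theorem hasEigenvalue_mulVecLin_iff {K n : Type*} [Field K] [Fintype n] [DecidableEq n]
    (M : Matrix n n K) {r : K} : Module.End.HasEigenvalue M.mulVecLin r ↔ r ∈ spectrum K M := by
  rw [Module.End.hasEigenvalue_iff_mem_spectrum, ← toLin'_apply', spectrum_toLin']

end Matrix

section Eigenvalues

variable {d : ℕ} {M : Matrix (Fin d) (Fin d) ℝ}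

theorem minEig_le_of_mem_spectrum {r : ℝ} (hr : r ∈ spectrum ℝ M) : minEig M ≤ r :=
  csInf_le (M.finite_spectrum.subset fun _ ↦ M.hasEigenvalue_mulVecLin_iff.mp).bddBelow
    (M.hasEigenvalue_mulVecLin_iff.mpr hr)

theorem minEig_nonneg (hM : M.PosSemidef) : 0 ≤ minEig M :=
  Real.sInf_nonneg fun _ hr ↦
    spectrum_nonneg_of_nonneg hM.nonneg (M.hasEigenvalue_mulVecLin_iff.mp hr)

theorem minPosEig_le_of_mem_spectrum {r : ℝ} (hr : r ∈ spectrum ℝ M) (hr0 : 0 < r) :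
    minPosEig M ≤ r :=
  csInf_le (M.finite_spectrum.subset fun _ h ↦ M.hasEigenvalue_mulVecLin_iff.mp h.2).bddBelow
    ⟨hr0, M.hasEigenvalue_mulVecLin_iff.mpr hr⟩

theorem algebraMap_minEig_le (hM : M.IsHermitian) : algebraMap ℝ _ (minEig M) ≤ M :=
  algebraMap_le_of_le_spectrum (fun _ ↦ minEig_le_of_mem_spectrum) hM

theorem minPosEig_smul_le_mul_self (hM : M.PosSemidef) : minPosEig M • M ≤ M * M :=
  smul_le_mul_self_of_le_of_mem_spectrum hM.nonneg fun _ ↦ minPosEig_le_of_mem_spectrum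

end Eigenvalues

theorem quad_AHA_ge_general {d : ℕ} (A H : Matrix (Fin d) (Fin d) ℝ)
    (hA : A.PosSemidef) (hH : H.PosDef) (v : Fin d → ℝ) :
    (A * H * A).mulVec v ⬝ᵥ v ≥ minEig H * minPosEig A * (A.mulVec v ⬝ᵥ v) := by
  have hLoewner : (minEig H * minPosEig A) • A ≤ A * H * A :=
    calc (minEig H * minPosEig A) • A = minEig H • (minPosEig A • A) := mul_smul _ _ _
      _ ≤ minEig H • (A * A) :=
        smul_le_smul_of_nonneg_left (minPosEig_smul_le_mul_self hA) (minEig_nonneg hH.posSemidef)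
      _ ≤ A * H * A :=
        smul_mul_self_le_mul_mul_of_algebraMap_le hA.isHermitian
          (algebraMap_minEig_le hH.isHermitian)
  simpa only [smul_mulVec, smul_dotProduct, smul_eq_mul] using
    mulVec_dotProduct_le_of_le hLoewner v

theorem quad_AHA_ge {d : ℕ} (A H : Matrix (Fin d) (Fin d) ℝ)
    (hA : A.PosSemidef) (hA0 : A ≠ 0) (hH : H.PosDef) (v : Fin d → ℝ) :
    (A * H * A).mulVec v ⬝ᵥ v ≥ minEig H * minPosEig A * (A.mulVec v ⬝ᵥ v) :=
  quad_AHA_ge_general A H hA hH v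
end

section
/- Let H_pp, H_qp, H_qq : ℝ → Matrix(d,d,ℝ) be continuous curves of matrices with H_pp(t), H_qq(t) symmetric, and suppose the symmetric matrix curves 𝕌(t) and 𝕊(t) both satisfy the matrix Riccati equation Ġ + G·H_pp·G + G·H_qp + ᵀH_qp·G + H_qq = 0. If δq(t) solves δq̇ = (H_qp + H_pp·𝕌)·δq, then d/dt ⟨(𝕌(t) − 𝕊(t)) δq(t), δq(t)⟩ = ⟨H_pp(t)(𝕌(t) − 𝕊(t)) δq(t), (𝕌(t) − 𝕊(t)) δq(t)⟩; in particular this derivative is nonnegative when H_pp(t) is positive semi-definite. -/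
/-!
Subtracting the two Riccati equations, `W = 𝕌 - 𝕊` satisfies `Ẇ + W A + Aᵀ W = W H_pp W`, where
`A = H_qp + H_pp 𝕌` generates the flow of `δq`. The derivative of `⟨W δq, δq⟩` along that flow
is `⟨(Ẇ + W A + Aᵀ W) δq, δq⟩ = ⟨W H_pp W δq, δq⟩`, which
equals `⟨H_pp W δq, W δq⟩` because `W` is symmetric.
-/

open Matrix

section Calculus

variable {m n : Type*} [Fintype n] {t : ℝ}

theorem HasDerivAt.dotProduct {u w : ℝ → n → ℝ} {u' w' : n → ℝ}
    (hu : HasDerivAt u u' t) (hw : HasDerivAt w w' t) :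
    HasDerivAt (fun s => u s ⬝ᵥ w s) (u' ⬝ᵥ w t + u t ⬝ᵥ w') t := by
  have h := HasDerivAt.fun_sum fun i (_ : i ∈ Finset.univ) =>
    (hasDerivAt_pi.mp hu i).mul (hasDerivAt_pi.mp hw i)
  exact h.congr_deriv Finset.sum_add_distrib

theorem hasDerivAt_mulVec {M : ℝ → Matrix m n ℝ} {M' : Matrix m n ℝ} {x : ℝ → n → ℝ}
    {x' : n → ℝ} (hM : ∀ i j, HasDerivAt (fun s => M s i j) (M' i j) t)
    (hx : HasDerivAt x x' t) :
    HasDerivAt (fun s => M s *ᵥ x s) (M' *ᵥ x t + M t *ᵥ x') t :=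
  hasDerivAt_pi.mpr fun i => (hasDerivAt_pi.mpr (hM i)).dotProduct hx

theorem mulVec_dotProduct_mulVec {R : Type*} [CommSemiring R] (M N : Matrix n n R)
    (v : n → R) : M *ᵥ v ⬝ᵥ N *ᵥ v = (Nᵀ * M) *ᵥ v ⬝ᵥ v := by
  rw [dotProduct_mulVec, ← mulVec_transpose, mulVec_mulVec]

theorem hasDerivAt_quadForm_of_linear {M : ℝ → Matrix n n ℝ} {M' A : Matrix n n ℝ}
    {x : ℝ → n → ℝ} (hM : ∀ i j, HasDerivAt (fun s => M s i j) (M' i j) t)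
    (hx : HasDerivAt x (A *ᵥ x t) t) :
    HasDerivAt (fun s => M s *ᵥ x s ⬝ᵥ x s) ((M' + M t * A + Aᵀ * M t) *ᵥ x t ⬝ᵥ x t) t := by
  refine ((hasDerivAt_mulVec hM hx).dotProduct hx).congr_deriv ?_
  simp only [mulVec_dotProduct_mulVec (M t) A, mulVec_mulVec, add_mulVec, add_dotProduct]

end Calculus

theorem riccati_sub_eq {n R : Type*} [Fintype n] [DecidableEq n] [CommRing R]
    {Hpp Hqp Hqq U S U' S' : Matrix n n R} (hHpp : Hpp.IsSymm) (hU : U.IsSymm)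
    (hUric : U' + U * Hpp * U + U * Hqp + Hqpᵀ * U + Hqq = 0)
    (hSric : S' + S * Hpp * S + S * Hqp + Hqpᵀ * S + Hqq = 0) :
    (U' - S') + (U - S) * (Hqp + Hpp * U) + (Hqp + Hpp * U)ᵀ * (U - S)
      = (U - S) * Hpp * (U - S) := by
  have hU' : U' = -(U * Hpp * U + U * Hqp + Hqpᵀ * U + Hqq) := by
    rw [← sub_eq_zero, ← hUric]; abel
  have hS' : S' = -(S * Hpp * S + S * Hqp + Hqpᵀ * S + Hqq) := by
    rw [← sub_eq_zero, ← hSric]; abel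
  rw [transpose_add, transpose_mul, hHpp.eq, hU.eq, hU', hS']
  noncomm_ring

theorem riccati_monotonicity_general {d : ℕ}
    (Hpp Hqp Hqq U S U' S' : ℝ → Matrix (Fin d) (Fin d) ℝ)
    (δq : ℝ → Fin d → ℝ)
    (hHppsymm : ∀ t, (Hpp t).IsSymm)
    (hUsymm : ∀ t, (U t).IsSymm) (hSsymm : ∀ t, (S t).IsSymm)
    (hU' : ∀ t i j, HasDerivAt (fun s => U s i j) (U' t i j) t)
    (hS' : ∀ t i j, HasDerivAt (fun s => S s i j) (S' t i j) t)
    (hUric : ∀ t, U' t + U t * Hpp t * U t + U t * Hqp t + (Hqp t)ᵀ * U t + Hqq t = 0)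
    (hSric : ∀ t, S' t + S t * Hpp t * S t + S t * Hqp t + (Hqp t)ᵀ * S t + Hqq t = 0)
    (hδq : ∀ t, HasDerivAt δq ((Hqp t + Hpp t * U t).mulVec (δq t)) t) :
    ∀ t : ℝ,
      HasDerivAt (fun s => (U s - S s).mulVec (δq s) ⬝ᵥ δq s)
        ((Hpp t).mulVec ((U t - S t).mulVec (δq t)) ⬝ᵥ (U t - S t).mulVec (δq t)) t ∧
      ((Hpp t).PosSemidef →
        0 ≤ (Hpp t).mulVec ((U t - S t).mulVec (δq t)) ⬝ᵥ (U t - S t).mulVec (δq t)) := by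
  intro t
  have hW : ∀ i j, HasDerivAt (fun s => (U s - S s) i j) ((U' t - S' t) i j) t :=
    fun i j => (hU' t i j).sub (hS' t i j)
  have hWsymm : (U t - S t)ᵀ = U t - S t := by
    rw [transpose_sub, (hUsymm t).eq, (hSsymm t).eq]
  refine ⟨(hasDerivAt_quadForm_of_linear hW (hδq t)).congr_deriv ?_, fun hpsd => ?_⟩
  · rw [riccati_sub_eq (hHppsymm t) (hUsymm t) (hUric t) (hSric t),
      mulVec_mulVec, mulVec_dotProduct_mulVec, hWsymm, Matrix.mul_assoc]
  · simpa only [star_trivial, dotProduct_comm] using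
      hpsd.dotProduct_mulVec_nonneg ((U t - S t) *ᵥ δq t)

theorem riccati_monotonicity {d : ℕ}
    (Hpp Hqp Hqq U S U' S' : ℝ → Matrix (Fin d) (Fin d) ℝ)
    (δq : ℝ → Fin d → ℝ)
    (hHppc : ∀ i j, Continuous fun t => Hpp t i j)
    (hHqpc : ∀ i j, Continuous fun t => Hqp t i j)
    (hHqqc : ∀ i j, Continuous fun t => Hqq t i j)
    (hHppsymm : ∀ t, (Hpp t).IsSymm) (hHqqsymm : ∀ t, (Hqq t).IsSymm)
    (hUsymm : ∀ t, (U t).IsSymm) (hSsymm : ∀ t, (S t).IsSymm)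
    (hU' : ∀ t i j, HasDerivAt (fun s => U s i j) (U' t i j) t)
    (hS' : ∀ t i j, HasDerivAt (fun s => S s i j) (S' t i j) t)
    (hUric : ∀ t, U' t + U t * Hpp t * U t + U t * Hqp t + (Hqp t)ᵀ * U t + Hqq t = 0)
    (hSric : ∀ t, S' t + S t * Hpp t * S t + S t * Hqp t + (Hqp t)ᵀ * S t + Hqq t = 0)
    (hδq : ∀ t, HasDerivAt δq ((Hqp t + Hpp t * U t).mulVec (δq t)) t) :
    ∀ t : ℝ,
      HasDerivAt (fun s => (U s - S s).mulVec (δq s) ⬝ᵥ δq s)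
        ((Hpp t).mulVec ((U t - S t).mulVec (δq t)) ⬝ᵥ (U t - S t).mulVec (δq t)) t ∧
      ((Hpp t).PosSemidef →
        0 ≤ (Hpp t).mulVec ((U t - S t).mulVec (δq t)) ⬝ᵥ (U t - S t).mulVec (δq t)) :=
  riccati_monotonicity_general Hpp Hqp Hqq U S U' S' δq hHppsymm hUsymm hSsymm hU' hS' hUric hSric
    hδq
end

section
/- Let 𝕊, 𝕌, S₀ be d×d real matrices with 𝕊, 𝕌 symmetric, S₀ symmetric positive definite, and S₀² = 𝕌 − 𝕊. Then the 2d×2d block matrix P = [[S₀⁻¹, S₀⁻¹], [𝕊·S₀⁻¹, 𝕌·S₀⁻¹]] is symplectic for the standard form, and its inverse is P⁻¹ = [[S₀⁻¹·𝕌, −S₀⁻¹], [−S₀⁻¹·𝕊, S₀⁻¹]]. -/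
open Matrix

/-!
Up to sign, the form `fromBlocks 0 1 (-1) 0` is Mathlib's `J`, so `P` lies in the symplectic
group. By the block criterion for symplecticity, a matrix `[[T, T], [S T, U T]]` with `S`, `U`
symmetric is symplectic as soon as `Tᵀ (U - S) T = 1`, which for `T = S₀⁻¹` is `S₀² = U - S`.
The inverse of a symplectic matrix `M = [[A, B], [C, D]]` is `-J Mᵀ J = [[Dᵀ, -Bᵀ], [-Cᵀ, Aᵀ]]`.
-/

namespace SymplecticGroup

variable {l R : Type*} [DecidableEq l] [CommRing R]

theorem neg_J_eq_fromBlocks : -J l R = fromBlocks 0 1 (-1) 0 := by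
  simp [J, fromBlocks_neg]

variable [Fintype l]

theorem mem_iff_transpose_mul_neg_J_mul {M : Matrix (l ⊕ l) (l ⊕ l) R} :
    M ∈ symplecticGroup l R ↔ Mᵀ * (-J l R) * M = -J l R := by
  rw [mem_iff', Matrix.mul_neg, Matrix.neg_mul, neg_inj]

theorem inv_fromBlocks {A B C D : Matrix l l R}
    (hM : fromBlocks A B C D ∈ symplecticGroup l R) :
    (fromBlocks A B C D)⁻¹ = fromBlocks Dᵀ (-Bᵀ) (-Cᵀ) Aᵀ := by
  rw [inv_eq_symplectic_inv _ hM, J, fromBlocks_transpose, fromBlocks_neg, fromBlocks_multiply,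
    fromBlocks_multiply]
  simp

theorem fromBlocks_mul_mem {S U T : Matrix l l R} (hS : S.IsSymm) (hU : U.IsSymm)
    (hT : Tᵀ * (U - S) * T = 1) :
    fromBlocks T T (S * T) (U * T) ∈ symplecticGroup l R := by
  refine fromBlocks_mem_iff.2 ⟨?_, ?_, ?_⟩
  · rw [transpose_mul, hS.eq, Matrix.mul_assoc]
  · rw [transpose_mul, hU.eq, Matrix.mul_assoc]
  · rw [← hT, transpose_mul, hS.eq, Matrix.mul_sub, Matrix.sub_mul, Matrix.mul_assoc,
      Matrix.mul_assoc]

end SymplecticGroup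

open SymplecticGroup in
theorem green_change_of_basis_symplectic {d : ℕ}
    (S U S₀ : Matrix (Fin d) (Fin d) ℝ)
    (hS : S.IsSymm) (hU : U.IsSymm) (hS₀ : S₀.PosDef)
    (hsq : S₀ * S₀ = U - S) :
    (Matrix.fromBlocks S₀⁻¹ S₀⁻¹ (S * S₀⁻¹) (U * S₀⁻¹))ᵀ *
        Matrix.fromBlocks 0 1 (-1) 0 *
        Matrix.fromBlocks S₀⁻¹ S₀⁻¹ (S * S₀⁻¹) (U * S₀⁻¹) =
      Matrix.fromBlocks 0 1 (-1) 0 ∧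
    (Matrix.fromBlocks S₀⁻¹ S₀⁻¹ (S * S₀⁻¹) (U * S₀⁻¹))⁻¹ =
      Matrix.fromBlocks (S₀⁻¹ * U) (-S₀⁻¹) (-(S₀⁻¹ * S)) S₀⁻¹ := by
  have hinv_symm : (S₀⁻¹)ᵀ = S₀⁻¹ := (isHermitian_iff_isSymm.1 hS₀.inv.isHermitian).eq
  have hdet : IsUnit S₀.det := (isUnit_iff_isUnit_det S₀).1 hS₀.isUnit
  have hP : fromBlocks S₀⁻¹ S₀⁻¹ (S * S₀⁻¹) (U * S₀⁻¹) ∈ symplecticGroup (Fin d) ℝ := by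
    refine fromBlocks_mul_mem hS hU ?_
    rw [hinv_symm, ← hsq, Matrix.mul_assoc, Matrix.mul_assoc, mul_nonsing_inv _ hdet,
      Matrix.mul_one, nonsing_inv_mul _ hdet]
  refine ⟨?_, ?_⟩
  · simpa only [neg_J_eq_fromBlocks] using mem_iff_transpose_mul_neg_J_mul.1 hP
  · rw [inv_fromBlocks hP, transpose_mul, transpose_mul, hinv_symm, hS.eq, hU.eq]
end

section
/- Let M = [[a, b], [c, d]] be a symplectic 2d×2d block matrix with b invertible. Suppose M·(graph of symmetric U) = graph of symmetric U' and M·(graph of symmetric S) = graph of symmetric S', where U − S and U' − S' are positive definite with positive definite square roots S₀ and S₀'. Let P = [[S₀⁻¹, S₀⁻¹],[S·S₀⁻¹, U·S₀⁻¹]], and let P' be built in the same way from (S', U', S₀'). Then the conjugated matrix P'⁻¹ M P is block diagonal, P'⁻¹ M P = [[ã, 0],[0, d̃]], and moreover ᵀã·d̃ = 1. -/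
open Matrix

/-- The graph of the matrix `U`, as a subspace of `ℝ^d ⊕ ℝ^d`. -/
def graphSub {d : ℕ} (U : Matrix (Fin d) (Fin d) ℝ) :
    Submodule ℝ (Fin d ⊕ Fin d → ℝ) where
  carrier := {x | ∀ i, x (Sum.inr i) = U.mulVec (fun j => x (Sum.inl j)) i}
  add_mem' := by
    intro x y hx hy i
    simp only [Pi.add_apply, hx i, hy i]
    rw [show (fun j => x (Sum.inl j) + y (Sum.inl j)) =
      (fun j => x (Sum.inl j)) + fun j => y (Sum.inl j) from rfl, Matrix.mulVec_add]
    rfl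
  zero_mem' := by
    intro i
    simp only [Pi.zero_apply]
    rw [show (fun _ : Fin d => (0 : ℝ)) = (0 : Fin d → ℝ) from rfl, Matrix.mulVec_zero]
    rfl
  smul_mem' := by
    intro c x hx i
    simp only [Pi.smul_apply, hx i, smul_eq_mul]
    rw [show (fun j => c * x (Sum.inl j)) = c • fun j => x (Sum.inl j) from rfl,
      Matrix.mulVec_smul]
    rfl

private lemma eq_of_mulVec_eq' {d : ℕ} {A B : Matrix (Fin d) (Fin d) ℝ}
    (h : ∀ v, A.mulVec v = B.mulVec v) : A = B := by
  ext i j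
  have := congrFun (h (Pi.single j 1)) i
  simpa [Matrix.mulVec_single] using this

private lemma graph_rel' {d : ℕ} (a b c dd S S' : Matrix (Fin d) (Fin d) ℝ)
    (hgraphS : (graphSub S).map (Matrix.fromBlocks a b c dd).mulVecLin = graphSub S') :
    c + dd * S = S' * (a + b * S) := by
  apply eq_of_mulVec_eq'
  intro v
  have hx : (Sum.elim v (S.mulVec v)) ∈ graphSub S := by
    intro i; rfl
  have hmem : (Matrix.fromBlocks a b c dd).mulVecLin (Sum.elim v (S.mulVec v)) ∈ graphSub S' := by
    rw [← hgraphS]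
    exact Submodule.mem_map_of_mem hx
  have key : ∀ i, ((Matrix.fromBlocks a b c dd).mulVecLin (Sum.elim v (S.mulVec v))) (Sum.inr i)
      = S'.mulVec (fun j => ((Matrix.fromBlocks a b c dd).mulVecLin
        (Sum.elim v (S.mulVec v))) (Sum.inl j)) i := hmem
  funext i
  have := key i
  simp only [Matrix.mulVecLin_apply, Matrix.fromBlocks_mulVec, Sum.elim_inr, Sum.elim_inl] at this
  simp only [Sum.elim_comp_inl, Sum.elim_comp_inr, Matrix.mulVec_mulVec,
    Pi.add_apply] at this
  rw [show (fun j => (a *ᵥ v) j + ((b * S) *ᵥ v) j) = a *ᵥ v + (b * S) *ᵥ v from rfl] at this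
  simpa [← Matrix.mulVec_mulVec, Matrix.add_mulVec] using this

theorem conjugated_twist_map_block_diagonal {d : ℕ}
    (a b c dd : Matrix (Fin d) (Fin d) ℝ) (hb : IsUnit b)
    (hM : (Matrix.fromBlocks a b c dd)ᵀ * Matrix.fromBlocks 0 1 (-1) 0 *
        Matrix.fromBlocks a b c dd = Matrix.fromBlocks 0 1 (-1) 0)
    (S S' U U' S₀ S₀' : Matrix (Fin d) (Fin d) ℝ)
    (hS : S.IsSymm) (hS' : S'.IsSymm) (hU : U.IsSymm) (hU' : U'.IsSymm)
    (hS₀ : S₀.PosDef) (hS₀' : S₀'.PosDef)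
    (hsq : S₀ * S₀ = U - S) (hsq' : S₀' * S₀' = U' - S')
    (hgraphU : (graphSub U).map (Matrix.fromBlocks a b c dd).mulVecLin = graphSub U')
    (hgraphS : (graphSub S).map (Matrix.fromBlocks a b c dd).mulVecLin = graphSub S') :
    ∃ atil dtil : Matrix (Fin d) (Fin d) ℝ,
      (Matrix.fromBlocks S₀'⁻¹ S₀'⁻¹ (S' * S₀'⁻¹) (U' * S₀'⁻¹))⁻¹ *
          Matrix.fromBlocks a b c dd *
          Matrix.fromBlocks S₀⁻¹ S₀⁻¹ (S * S₀⁻¹) (U * S₀⁻¹) =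
        Matrix.fromBlocks atil 0 0 dtil ∧ atilᵀ * dtil = 1 := by
  -- basic invertibility facts
  have hdet : IsUnit S₀.det := (Matrix.isUnit_iff_isUnit_det _).1 hS₀.isUnit
  have hdet' : IsUnit S₀'.det := (Matrix.isUnit_iff_isUnit_det _).1 hS₀'.isUnit
  have hS₀t : S₀ᵀ = S₀ := by
    rw [← Matrix.conjTranspose_eq_transpose_of_trivial]; exact hS₀.isHermitian
  have hS₀'t : S₀'ᵀ = S₀' := by
    rw [← Matrix.conjTranspose_eq_transpose_of_trivial]; exact hS₀'.isHermitian
  -- graph relations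
  have hrelS : c + dd * S = S' * (a + b * S) := graph_rel' a b c dd S S' hgraphS
  have hrelU : c + dd * U = U' * (a + b * U) := graph_rel' a b c dd U U' hgraphU
  -- symplectic relations
  rw [Matrix.fromBlocks_transpose, Matrix.fromBlocks_multiply, Matrix.fromBlocks_multiply,
    Matrix.fromBlocks_inj] at hM
  simp only [Matrix.mul_zero, Matrix.mul_one, Matrix.mul_neg, zero_add, add_zero,
    Matrix.zero_mul, Matrix.one_mul, Matrix.neg_mul] at hM
  obtain ⟨h1, h2, h3, h4⟩ := hM
  have e1 : aᵀ * c - cᵀ * a = 0 := by rw [← h1]; noncomm_ring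
  have e2 : aᵀ * dd - cᵀ * b = 1 := by rw [← h2]; noncomm_ring
  have e3 : bᵀ * c - ddᵀ * a = -1 := by rw [← h3]; noncomm_ring
  have e4 : bᵀ * dd - ddᵀ * b = 0 := by rw [← h4]; noncomm_ring
  -- key algebraic identity
  have hTS' : (a + b * S)ᵀ * S' = (c + dd * S)ᵀ := by
    conv_lhs => rw [← hS'.eq]
    rw [← Matrix.transpose_mul, ← hrelS]
  have hkey : (a + b * S)ᵀ * ((U' - S') * (a + b * U)) = U - S := by
    calc (a + b * S)ᵀ * ((U' - S') * (a + b * U))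
        = (a + b * S)ᵀ * (U' * (a + b * U)) - ((a + b * S)ᵀ * S') * (a + b * U) := by
          noncomm_ring
      _ = (a + b * S)ᵀ * (c + dd * U) - (c + dd * S)ᵀ * (a + b * U) := by
          rw [← hrelU, hTS']
      _ = (aᵀ * c - cᵀ * a) + (aᵀ * dd - cᵀ * b) * U + S * (bᵀ * c - ddᵀ * a)
          + S * ((bᵀ * dd - ddᵀ * b) * U) := by
          simp only [Matrix.transpose_add, Matrix.transpose_mul, hS.eq]
          noncomm_ring
      _ = U - S := by rw [e1, e2, e3, e4]; noncomm_ring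
  -- the left inverse of P'
  have hw : ∀ W : Matrix (Fin d) (Fin d) ℝ,
      S₀'⁻¹ * (U' * W) - S₀'⁻¹ * (S' * W) = S₀' * W := by
    intro W
    calc S₀'⁻¹ * (U' * W) - S₀'⁻¹ * (S' * W)
        = S₀'⁻¹ * ((U' - S') * W) := by noncomm_ring
      _ = S₀'⁻¹ * S₀' * (S₀' * W) := by rw [← hsq']; noncomm_ring
      _ = S₀' * W := by rw [Matrix.nonsing_inv_mul _ hdet', Matrix.one_mul]
  have hQ : Matrix.fromBlocks (S₀'⁻¹ * U') (-S₀'⁻¹) (-(S₀'⁻¹ * S')) S₀'⁻¹ *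
      Matrix.fromBlocks S₀'⁻¹ S₀'⁻¹ (S' * S₀'⁻¹) (U' * S₀'⁻¹) = 1 := by
    rw [Matrix.fromBlocks_multiply, ← Matrix.fromBlocks_one, Matrix.fromBlocks_inj]
    refine ⟨?_, ?_, ?_, ?_⟩
    · calc (S₀'⁻¹ * U') * S₀'⁻¹ + (-S₀'⁻¹) * (S' * S₀'⁻¹)
          = S₀'⁻¹ * (U' * S₀'⁻¹) - S₀'⁻¹ * (S' * S₀'⁻¹) := by noncomm_ring
        _ = S₀' * S₀'⁻¹ := hw _
        _ = 1 := Matrix.mul_nonsing_inv _ hdet'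
    · noncomm_ring
    · noncomm_ring
    · calc (-(S₀'⁻¹ * S')) * S₀'⁻¹ + S₀'⁻¹ * (U' * S₀'⁻¹)
          = S₀'⁻¹ * (U' * S₀'⁻¹) - S₀'⁻¹ * (S' * S₀'⁻¹) := by noncomm_ring
        _ = S₀' * S₀'⁻¹ := hw _
        _ = 1 := Matrix.mul_nonsing_inv _ hdet'
  refine ⟨S₀' * ((a + b * S) * S₀⁻¹), S₀' * ((a + b * U) * S₀⁻¹), ?_, ?_⟩
  · rw [Matrix.inv_eq_left_inv hQ, Matrix.mul_assoc, Matrix.fromBlocks_multiply,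
      Matrix.fromBlocks_multiply, Matrix.fromBlocks_inj]
    refine ⟨?_, ?_, ?_, ?_⟩
    · calc (S₀'⁻¹ * U') * (a * S₀⁻¹ + b * (S * S₀⁻¹)) +
            (-S₀'⁻¹) * (c * S₀⁻¹ + dd * (S * S₀⁻¹))
          = S₀'⁻¹ * (U' * ((a + b * S) * S₀⁻¹)) - S₀'⁻¹ * ((c + dd * S) * S₀⁻¹) := by
            noncomm_ring
        _ = S₀'⁻¹ * (U' * ((a + b * S) * S₀⁻¹)) - S₀'⁻¹ * (S' * ((a + b * S) * S₀⁻¹)) := by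
            rw [hrelS, Matrix.mul_assoc]
        _ = S₀' * ((a + b * S) * S₀⁻¹) := hw _
    · calc (S₀'⁻¹ * U') * (a * S₀⁻¹ + b * (U * S₀⁻¹)) +
            (-S₀'⁻¹) * (c * S₀⁻¹ + dd * (U * S₀⁻¹))
          = S₀'⁻¹ * (U' * ((a + b * U) * S₀⁻¹)) - S₀'⁻¹ * ((c + dd * U) * S₀⁻¹) := by
            noncomm_ring
        _ = 0 := by rw [hrelU, Matrix.mul_assoc, sub_self]
    · calc (-(S₀'⁻¹ * S')) * (a * S₀⁻¹ + b * (S * S₀⁻¹)) +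
            S₀'⁻¹ * (c * S₀⁻¹ + dd * (S * S₀⁻¹))
          = S₀'⁻¹ * ((c + dd * S) * S₀⁻¹) - S₀'⁻¹ * (S' * ((a + b * S) * S₀⁻¹)) := by
            noncomm_ring
        _ = 0 := by rw [hrelS, Matrix.mul_assoc, sub_self]
    · calc (-(S₀'⁻¹ * S')) * (a * S₀⁻¹ + b * (U * S₀⁻¹)) +
            S₀'⁻¹ * (c * S₀⁻¹ + dd * (U * S₀⁻¹))
          = S₀'⁻¹ * ((c + dd * U) * S₀⁻¹) - S₀'⁻¹ * (S' * ((a + b * U) * S₀⁻¹)) := by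
            noncomm_ring
        _ = S₀'⁻¹ * (U' * ((a + b * U) * S₀⁻¹)) - S₀'⁻¹ * (S' * ((a + b * U) * S₀⁻¹)) := by
            rw [hrelU, Matrix.mul_assoc]
        _ = S₀' * ((a + b * U) * S₀⁻¹) := hw _
  · rw [Matrix.transpose_mul, Matrix.transpose_mul, Matrix.transpose_nonsing_inv, hS₀t, hS₀'t]
    calc (S₀⁻¹ * (a + b * S)ᵀ) * S₀' * (S₀' * ((a + b * U) * S₀⁻¹))
        = S₀⁻¹ * (((a + b * S)ᵀ * ((S₀' * S₀') * (a + b * U))) * S₀⁻¹) := by noncomm_ring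
      _ = S₀⁻¹ * (((a + b * S)ᵀ * ((U' - S') * (a + b * U))) * S₀⁻¹) := by rw [hsq']
      _ = S₀⁻¹ * ((U - S) * S₀⁻¹) := by rw [hkey]
      _ = S₀⁻¹ * S₀ * (S₀ * S₀⁻¹) := by rw [← hsq]; noncomm_ring
      _ = 1 := by
          rw [Matrix.nonsing_inv_mul _ hdet, Matrix.one_mul, Matrix.mul_nonsing_inv _ hdet]
end

section
/- Let d̃ be an invertible d×d real matrix such that ᵀd̃·d̃ = I + S·A⁻¹·S, where S is symmetric positive definite, A is symmetric positive definite, and ‖A‖ ≤ C. Then the conorm of d̃ satisfies m(d̃)² ≥ 1 + m(S²)/C, where m(T) = ‖T⁻¹‖⁻¹ and ‖·‖ is the operator norm. -/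
/-!
Rewrite the hypothesis as a Loewner-order inequality: `S * S ≥ minEig (S * S)` and
`A ≤ ‖A‖ ≤ C` give `A⁻¹ ≥ C⁻¹`, and conjugating by the symmetric `S` yields
`ᵀd̃ * d̃ = 1 + S * A⁻¹ * S ≥ 1 + minEig (S * S) / C =: c`. Evaluating this quadratic form on
`d̃⁻¹ y` gives `√c * ‖d̃⁻¹ y‖ ≤ ‖y‖`, i.e. `‖d̃⁻¹‖ ≤ (√c)⁻¹`.
-/

open Matrix
open scoped Matrix.Norms.L2Operator MatrixOrder

namespace Matrix

theorem minEig_eq_sInf_spectrum {d : ℕ} (M : Matrix (Fin d) (Fin d) ℝ) :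
    minEig M = sInf (spectrum ℝ M) := by
  simp_rw [minEig, Module.End.hasEigenvalue_iff_mem_spectrum, Set.ofPred_mem_eq]
  exact congrArg sInf (spectrum_toLin' M)

theorem IsHermitian.algebraMap_minEig_le {d : ℕ} {M : Matrix (Fin d) (Fin d) ℝ}
    (hM : M.IsHermitian) : algebraMap ℝ _ (minEig M) ≤ M :=
  (algebraMap_le_iff_le_spectrum hM).2 fun _ hx ↦
    minEig_eq_sInf_spectrum M ▸ csInf_le M.finite_spectrum.bddBelow hx

variable {n : Type*} [Fintype n] [DecidableEq n]

theorem IsHermitian.le_algebraMap_norm_self [Nonempty n] {A : Matrix n n ℝ}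
    (hA : A.IsHermitian) : A ≤ algebraMap ℝ _ ‖A‖ :=
  le_algebraMap_of_spectrum_le
    (fun _ hx ↦ (le_abs_self _).trans (spectrum.norm_le_norm_of_mem hx)) hA

theorem PosDef.algebraMap_inv_le_inv {A : Matrix n n ℝ} {c : ℝ} (hA : A.PosDef)
    (h : A ≤ algebraMap ℝ _ c) : algebraMap ℝ _ c⁻¹ ≤ A⁻¹ := by
  refine (algebraMap_le_iff_le_spectrum hA.inv.1).2 fun x hx ↦ ?_
  have hx0 : 0 < x := (isStrictlyPositive_iff_posDef.2 hA.inv).spectrum_pos hx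
  have hx_inv : x⁻¹ ∈ spectrum ℝ A := by
    have := spectrum.map_inv (𝕜 := ℝ) hA.isUnit.unit
    rw [coe_units_inv, IsUnit.unit_spec] at this
    rwa [← Set.mem_inv, this]
  exact inv_le_of_inv_le₀ hx0 ((le_algebraMap_iff_spectrum_le hA.1).1 h _ hx_inv)

theorem mul_norm_sq_le_of_algebraMap_le_conjTranspose_mul_self {M : Matrix n n ℝ} {c : ℝ}
    (h : algebraMap ℝ _ c ≤ Mᴴ * M) (x : EuclideanSpace ℝ n) :
    c * ‖x‖ ^ 2 ≤ ‖toEuclideanCLM (𝕜 := ℝ) M x‖ ^ 2 := by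
  have hx : ‖x‖ ^ 2 = star x.ofLp ⬝ᵥ x.ofLp := by
    rw [← real_inner_self_eq_norm_sq, EuclideanSpace.inner_eq_star_dotProduct, dotProduct_comm]
  have hMx : ‖toEuclideanCLM (𝕜 := ℝ) M x‖ ^ 2 = star x.ofLp ⬝ᵥ (Mᴴ * M) *ᵥ x.ofLp := by
    rw [← real_inner_self_eq_norm_sq, EuclideanSpace.inner_eq_star_dotProduct,
      ofLp_toEuclideanCLM, star_mulVec, dotProduct_comm, ← dotProduct_mulVec, mulVec_mulVec]
  have hpsd := (le_iff.1 h).dotProduct_mulVec_nonneg x.ofLp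
  rw [sub_mulVec, dotProduct_sub, Algebra.algebraMap_eq_smul_one, smul_mulVec, one_mulVec,
    dotProduct_smul, smul_eq_mul, ← hx, ← hMx] at hpsd
  linarith

theorem le_inv_norm_inv_sq_of_algebraMap_le [Nonempty n] {M : Matrix n n ℝ} {c : ℝ}
    (hM : IsUnit M) (h : algebraMap ℝ _ c ≤ Mᴴ * M) : c ≤ ‖M⁻¹‖⁻¹ ^ 2 := by
  rcases le_or_gt c 0 with hc | hc
  · exact hc.trans (by positivity)
  have hbound : ‖M⁻¹‖ ≤ (√c)⁻¹ := by
    rw [cstar_norm_def]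
    refine ContinuousLinearMap.opNorm_le_bound _ (by positivity) fun y ↦ ?_
    have hy := mul_norm_sq_le_of_algebraMap_le_conjTranspose_mul_self h
      (toEuclideanCLM (𝕜 := ℝ) M⁻¹ y)
    rw [← mul_apply_eq_comp, ← map_mul,
      mul_nonsing_inv _ ((isUnit_iff_isUnit_det M).1 hM), map_one,
      one_apply_eq_self, ← Real.sq_sqrt hc.le, ← mul_pow] at hy
    rw [le_inv_mul_iff₀ (Real.sqrt_pos.2 hc)]
    exact (pow_le_pow_iff_left₀ (by positivity) (norm_nonneg _) two_ne_zero).1 hy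
  have hpos : 0 < ‖M⁻¹‖ := norm_pos_iff.2 (isUnit_nonsing_inv_iff.2 hM).ne_zero
  calc c = √c ^ 2 := (Real.sq_sqrt hc.le).symm
    _ ≤ ‖M⁻¹‖⁻¹ ^ 2 := by gcongr; exact le_inv_of_le_inv₀ hpos hbound

end Matrix

theorem conorm_sq_ge {d : ℕ} (hd : 0 < d) (C : ℝ)
    (dtil S A : Matrix (Fin d) (Fin d) ℝ) (hdtil : IsUnit dtil)
    (hS : S.PosDef) (hA : A.PosDef) (hC : ‖A‖ ≤ C)
    (heq : dtilᵀ * dtil = 1 + S * A⁻¹ * S) :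
    (‖dtil⁻¹‖⁻¹) ^ 2 ≥ 1 + minEig (S * S) / C := by
  have : Nonempty (Fin d) := Fin.pos_iff_nonempty.mp hd
  have hC0 : 0 < C := (norm_pos_iff.2 hA.isUnit.ne_zero).trans_le hC
  have hA_inv : algebraMap ℝ _ C⁻¹ ≤ A⁻¹ :=
    hA.algebraMap_inv_le_inv (hA.1.le_algebraMap_norm_self.trans (algebraMap_mono _ hC))
  have hSS : (S * S).IsHermitian := by simpa only [sq] using hS.1.pow 2
  have hSAS : algebraMap ℝ _ (minEig (S * S) / C) ≤ S * A⁻¹ * S := calc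
    algebraMap ℝ _ (minEig (S * S) / C) = C⁻¹ • algebraMap ℝ _ (minEig (S * S)) := by
      rw [div_eq_inv_mul, map_mul, Algebra.smul_def]
    _ ≤ C⁻¹ • (S * S) := smul_le_smul_of_nonneg_left hSS.algebraMap_minEig_le (by positivity)
    _ = star S * algebraMap ℝ _ C⁻¹ * S := by
      rw [Algebra.algebraMap_eq_smul_one, hS.1.star_eq]; simp
    _ ≤ star S * A⁻¹ * S := star_left_conjugate_le_conjugate hA_inv S
    _ = S * A⁻¹ * S := by rw [hS.1.star_eq]
  have hgram : algebraMap ℝ _ (1 + minEig (S * S) / C) ≤ dtilᴴ * dtil := by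
    rw [map_add, map_one, conjTranspose_eq_transpose_of_trivial, heq]
    exact add_le_add_right hSAS 1
  exact le_inv_norm_inv_sq_of_algebraMap_le hdtil hgram
end

section
/- Consider the block tridiagonal symmetric matrix H of size (N−M+1)d with diagonal blocks a_M, …, a_N (symmetric d×d) and off-diagonal blocks b_M, …, b_{N−1} (each invertible d×d), so H((ζₙ))ₙ = ᵀb_{n−1}ζ_{n−1} + aₙζₙ + bₙζ_{n+1} (with ζ_{M−1} = ζ_{N+1} = 0). Suppose that for every M' ≤ M and N' ≥ N the analogously defined matrix H_{M',N'} (with blocks coming from fixed bi-infinite sequences (aₙ), (bₙ)) is positive semi-definite, and all bₙ are invertible. Then H = H_{M,N} is positive definite. -/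
open Matrix

/-- The quadratic form of the block tridiagonal matrix with diagonal blocks `a n` and
off-diagonal blocks `b n`, acting on sequences `ζ` (supported in `[M, N]`). -/
noncomputable def triQuad {d : ℕ} (a b : ℤ → Matrix (Fin d) (Fin d) ℝ) (M N : ℤ)
    (ζ : ℤ → Fin d → ℝ) : ℝ :=
  ∑ n ∈ Finset.Icc M N,
    ζ n ⬝ᵥ ((b (n - 1))ᵀ.mulVec (ζ (n - 1)) + (a n).mulVec (ζ n) + (b n).mulVec (ζ (n + 1)))

/-!
Let `H` be the bi-infinite Jacobi operator `(Hζ)ₙ = ᵀb_{n-1}ζ_{n-1} + aₙζₙ + bₙζ_{n+1}`.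
If `ζ ≠ 0`, supported in `[M, N]`, were isotropic for `H_{M,N}`, it would also be isotropic for
the positive semi-definite form `H_{M-1,N+1}`, hence in its kernel, since for a positive
semi-definite symmetric form the isotropic cone is the kernel. So `(Hζ)ₙ = 0` on `[M-1, N+1]`:
a solution of the second-order recurrence vanishing at `M-2` and `M-1`, which forces `ζ = 0`
because every `bₙ` is invertible.
-/

open Finset

theorem Finset.sum_Icc_comp_sub_one {R : Type*} [AddCommMonoid R] (g : ℤ → R) {M N : ℤ}
    (hM : g (M - 1) = 0) (hN : g N = 0) :
    ∑ n ∈ Icc M N, g (n - 1) = ∑ n ∈ Icc M N, g n := by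
  have hshift : ∑ n ∈ Icc M N, g (n - 1) = ∑ n ∈ Icc (M - 1) (N - 1), g n := by
    rw [show Icc M N = (Icc (M - 1) (N - 1)).map (addRightEmbedding 1) by simp, sum_map]
    simp
  calc ∑ n ∈ Icc M N, g (n - 1)
      = ∑ n ∈ Icc (M - 1) N, g n := by
        rw [hshift]
        refine sum_subset (Icc_subset_Icc le_rfl (by omega)) fun n hn hn' => ?_
        obtain rfl : n = N := by simp only [mem_Icc] at hn hn'; omega
        exact hN
    _ = ∑ n ∈ Icc M N, g n := by
        refine (sum_subset (Icc_subset_Icc (by omega) le_rfl) fun n hn hn' => ?_).symm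
        obtain rfl : n = M - 1 := by simp only [mem_Icc] at hn hn'; omega
        exact hM

namespace JacobiOperator

variable {d : ℕ} (a b : ℤ → Matrix (Fin d) (Fin d) ℝ)

def jacobiOp : (ℤ → Fin d → ℝ) →ₗ[ℝ] ℤ → Fin d → ℝ where
  toFun ζ n := (b (n - 1))ᵀ *ᵥ ζ (n - 1) + a n *ᵥ ζ n + b n *ᵥ ζ (n + 1)
  map_add' ζ η := by
    ext n : 1
    simp only [Pi.add_apply, mulVec_add]
    abel
  map_smul' c ζ := by
    ext n : 1
    simp only [Pi.smul_apply, mulVec_smul, smul_add, RingHom.id_apply]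

theorem jacobiOp_apply (ζ : ℤ → Fin d → ℝ) (n : ℤ) :
    jacobiOp a b ζ n = (b (n - 1))ᵀ *ᵥ ζ (n - 1) + a n *ᵥ ζ n + b n *ᵥ ζ (n + 1) := rfl

def jacobiForm (I : Finset ℤ) : LinearMap.BilinForm ℝ (ℤ → Fin d → ℝ) :=
  LinearMap.mk₂ ℝ (fun η ζ => ∑ n ∈ I, η n ⬝ᵥ jacobiOp a b ζ n)
    (fun η η' ζ => by simp only [Pi.add_apply, add_dotProduct, sum_add_distrib])
    (fun c η ζ => by simp only [Pi.smul_apply, smul_dotProduct, smul_eq_mul, mul_sum])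
    (fun η ζ ζ' => by simp only [map_add, Pi.add_apply, dotProduct_add, sum_add_distrib])
    (fun c η ζ => by simp only [map_smul, Pi.smul_apply, dotProduct_smul, smul_eq_mul, mul_sum])

variable {a b}

theorem jacobiForm_apply (I : Finset ℤ) (η ζ : ℤ → Fin d → ℝ) :
    jacobiForm a b I η ζ = ∑ n ∈ I, η n ⬝ᵥ jacobiOp a b ζ n := rfl

theorem triQuad_eq_jacobiForm (M N : ℤ) (ζ : ℤ → Fin d → ℝ) :
    triQuad a b M N ζ = jacobiForm a b (Icc M N) ζ ζ := rfl

theorem jacobiForm_single {I : Finset ℤ} {k : ℤ} (hk : k ∈ I) (v : Fin d → ℝ)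
    (ζ : ℤ → Fin d → ℝ) :
    jacobiForm a b I (Pi.single k v) ζ = v ⬝ᵥ jacobiOp a b ζ k := by
  rw [jacobiForm_apply, sum_eq_single_of_mem k hk fun n _ hn => by simp [hn]]
  simp

theorem sum_dotProduct_transpose_mulVec_sub_one {M N : ℤ} {ζ η : ℤ → Fin d → ℝ}
    (hζ : ∀ n ∉ Icc M N, ζ n = 0) (hη : ∀ n ∉ Icc M N, η n = 0) :
    ∑ n ∈ Icc M N, η n ⬝ᵥ (b (n - 1))ᵀ *ᵥ ζ (n - 1) =
      ∑ n ∈ Icc M N, ζ n ⬝ᵥ b n *ᵥ η (n + 1) := by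
  rw [← sum_Icc_comp_sub_one (fun m => ζ m ⬝ᵥ b m *ᵥ η (m + 1))
    (by simp [hζ (M - 1)]) (by simp [hη (N + 1)])]
  simp only [dotProduct_transpose_mulVec, sub_add_cancel]

theorem jacobiForm_comm (ha : ∀ n, (a n).IsSymm) {M N : ℤ} {ζ η : ℤ → Fin d → ℝ}
    (hζ : ∀ n ∉ Icc M N, ζ n = 0) (hη : ∀ n ∉ Icc M N, η n = 0) :
    jacobiForm a b (Icc M N) η ζ = jacobiForm a b (Icc M N) ζ η := by
  have hdiag : ∀ n, η n ⬝ᵥ a n *ᵥ ζ n = ζ n ⬝ᵥ a n *ᵥ η n := fun n => by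
    rw [← (ha n).eq, dotProduct_transpose_mulVec, (ha n).eq]
  simp only [jacobiForm_apply, jacobiOp_apply, dotProduct_add, sum_add_distrib, hdiag,
    sum_dotProduct_transpose_mulVec_sub_one hζ hη, sum_dotProduct_transpose_mulVec_sub_one hη hζ]
  abel

theorem jacobiOp_eq_zero_of_jacobiForm_eq_zero (ha : ∀ n, (a n).IsSymm) {M N : ℤ}
    (hpsd : ∀ ζ : ℤ → Fin d → ℝ, (∀ n ∉ Icc M N, ζ n = 0) → 0 ≤ jacobiForm a b (Icc M N) ζ ζ)
    {ζ : ℤ → Fin d → ℝ} (hζ : ∀ n ∉ Icc M N, ζ n = 0) (h0 : jacobiForm a b (Icc M N) ζ ζ = 0) :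
    ∀ k ∈ Icc M N, jacobiOp a b ζ k = 0 := by
  let W : Submodule ℝ (ℤ → Fin d → ℝ) := Submodule.pi (↑(Icc M N))ᶜ fun _ => ⊥
  have mem_W {η} : η ∈ W ↔ ∀ n ∉ Icc M N, η n = 0 := by simp [W]
  let B : LinearMap.BilinForm ℝ W := (jacobiForm a b (Icc M N)).domRestrict₁₂ W W
  have hB : LinearMap.IsSymm B := ⟨fun η ζ => jacobiForm_comm ha (mem_W.1 ζ.2) (mem_W.1 η.2)⟩
  have hker : B ⟨ζ, mem_W.2 hζ⟩ = 0 :=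
    (B.apply_apply_same_eq_zero_iff (fun η => hpsd η (mem_W.1 η.2)) hB).1 h0
  intro k hk
  have hsingle : Pi.single k (jacobiOp a b ζ k) ∈ W := mem_W.2 fun n hn => by
    simp [(ne_of_mem_of_not_mem hk hn).symm]
  have h := LinearMap.congr_fun hker ⟨_, hsingle⟩
  rw [← hB.eq] at h
  simpa [B, LinearMap.domRestrict₁₂_apply, jacobiForm_single hk] using h

theorem jacobiForm_eq_of_subset {I J : Finset ℤ} (hIJ : I ⊆ J) {ζ : ℤ → Fin d → ℝ}
    (hζ : ∀ n ∉ I, ζ n = 0) : jacobiForm a b J ζ ζ = jacobiForm a b I ζ ζ :=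
  (sum_subset hIJ fun n _ hn => by rw [hζ n hn, zero_dotProduct]).symm

theorem eq_zero_of_jacobiOp_eq_zero (hb : ∀ n, IsUnit (b n)) {ζ : ℤ → Fin d → ℝ} {m m' : ℤ}
    (h₀ : ζ (m - 1) = 0) (h₁ : ζ m = 0) (hL : ∀ n ∈ Icc m m', jacobiOp a b ζ n = 0) :
    ∀ n ∈ Icc m (m' + 1), ζ n = 0 := by
  suffices h : ∀ n, m ≤ n → n ≤ m' + 1 → ζ (n - 1) = 0 ∧ ζ n = 0 from
    fun n hn => (h n (mem_Icc.1 hn).1 (mem_Icc.1 hn).2).2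
  intro n hmn
  induction n, hmn using Int.leInduction with
  | base => exact fun _ => ⟨h₀, h₁⟩
  | succ n hmn ih =>
    intro hn
    obtain ⟨hprev, hcur⟩ := ih (by omega)
    have hrec : b n *ᵥ ζ (n + 1) = b n *ᵥ 0 := by
      simpa [jacobiOp_apply, hprev, hcur] using hL n (mem_Icc.2 ⟨hmn, by omega⟩)
    exact ⟨by simpa using hcur, mulVec_injective_iff_isUnit.2 (hb n) hrec⟩

end JacobiOperator

open JacobiOperator in
theorem bialy_mackay_posdef_general {d : ℕ}
    (a b : ℤ → Matrix (Fin d) (Fin d) ℝ)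
    (hasymm : ∀ n, (a n).IsSymm) (hb : ∀ n, IsUnit (b n))
    (M N : ℤ)
    (hpsd : ∀ M' N', M' ≤ M → N ≤ N' →
      ∀ ζ : ℤ → Fin d → ℝ, (∀ n, n ∉ Finset.Icc M' N' → ζ n = 0) →
        0 ≤ triQuad a b M' N' ζ) :
    ∀ ζ : ℤ → Fin d → ℝ, (∀ n, n ∉ Finset.Icc M N → ζ n = 0) → ζ ≠ 0 →
      0 < triQuad a b M N ζ := by
  intro ζ hζ hne
  simp only [triQuad_eq_jacobiForm] at hpsd ⊢
  refine (hpsd M N le_rfl le_rfl ζ hζ).lt_of_ne' fun h0 => hne ?_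
  have hsub : Icc M N ⊆ Icc (M - 1) (N + 1) := Icc_subset_Icc (by omega) (by omega)
  have hker := jacobiOp_eq_zero_of_jacobiForm_eq_zero hasymm
    (hpsd (M - 1) (N + 1) (by omega) (by omega)) (fun n hn => hζ n fun h => hn (hsub h))
    ((jacobiForm_eq_of_subset hsub hζ).trans h0)
  funext n
  by_cases hn : n ∈ Icc M N
  · exact eq_zero_of_jacobiOp_eq_zero hb (hζ _ (by simp)) (hζ _ (by simp))
      (fun k hk => hker k (Icc_subset_Icc le_rfl (by omega) hk)) n (hsub hn)
  · exact hζ n hn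

theorem bialy_mackay_posdef {d : ℕ}
    (a b : ℤ → Matrix (Fin d) (Fin d) ℝ)
    (hasymm : ∀ n, (a n).IsSymm) (hb : ∀ n, IsUnit (b n))
    (M N : ℤ) (hMN : M ≤ N)
    (hpsd : ∀ M' N', M' ≤ M → N ≤ N' →
      ∀ ζ : ℤ → Fin d → ℝ, (∀ n, n ∉ Finset.Icc M' N' → ζ n = 0) →
        0 ≤ triQuad a b M' N' ζ) :
    ∀ ζ : ℤ → Fin d → ℝ, (∀ n, n ∉ Finset.Icc M N → ζ n = 0) → ζ ≠ 0 →
      0 < triQuad a b M N ζ :=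
  bialy_mackay_posdef_general a b hasymm hb M N hpsd
end
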